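/- Let Z ∈ ℝ^{n×n} be a real symmetric matrix and let c be a stable δ-MC-WL coloring for Z. Then c refines the projection Π(Z) of Z onto the PSD cone; that is, c(i,j) = c(p,q) implies Π(Z)_{ij} = Π(Z)_{pq} for all index pairs. -/

import Mathlib

/-- The multiset aggregated in the δ-MC-WL update for index pair `(i, j)`:
`{{(c(i,u), M_{uj}) : u, M_{uj} ≠ 0}} + {{(c(u,j), M_{iu}) : u, M_{iu} ≠ 0}}`. -/
noncomputable def deltaMCWLMultiset {n : ℕ} {Γ : Type*} (c : Fin n × Fin n → Γ)
    (M : Matrix (Fin n) (Fin n) ℝ) (i j : Fin n) : Multiset (Γ × ℝ) :=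
  (Finset.univ.filter (fun u => M u j ≠ 0)).val.map (fun u => (c (i, u), M u j)) +
  (Finset.univ.filter (fun u => M i u ≠ 0)).val.map (fun u => (c (u, j), M i u))

/-- `c` is a stable δ-MC-WL coloring for `M`. -/
def IsStableDeltaMCWL {n : ℕ} {Γ : Type*} (c : Fin n × Fin n → Γ)
    (M : Matrix (Fin n) (Fin n) ℝ) : Prop :=
  ∀ i j p q : Fin n, c (i, j) = c (p, q) →
    M i j = M p q ∧ (i = j ↔ p = q) ∧
      deltaMCWLMultiset c M i j = deltaMCWLMultiset c M p q

/-- The coloring `c` refines the matrix `A`. -/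
def Refines {n : ℕ} {Γ : Type*} (c : Fin n × Fin n → Γ)
    (A : Matrix (Fin n) (Fin n) ℝ) : Prop :=
  ∀ i j p q : Fin n, c (i, j) = c (p, q) → A i j = A p q

/-- The Frobenius norm of a real square matrix. -/
noncomputable def frobNorm {n : ℕ} (A : Matrix (Fin n) (Fin n) ℝ) : ℝ :=
  Real.sqrt (∑ i, ∑ j, A i j ^ 2)

/-!
Each step of the δ-MC-WL refinement is the entrywise identity
`(A Z + Z A)ᵢⱼ = Σ_{(γ, z) ∈ multiset(i, j)} f(γ) z`, valid whenever `A = f ∘ c`; stability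
therefore propagates "`c` refines `A`" from `A` to `A Z + Z A`, and by induction from `1` to
every power of `Z`, hence to every polynomial in `Z`. The PSD projection of `Z` is its positive
part `Z⁺ = Z + Z⁻`: for PSD `P`, `‖P - Z‖² = ‖P - Z⁺‖² + 2 tr((P - Z⁺) Z⁻) + ‖Z⁻‖²`, and the
cross term equals `tr(P Z⁻) ≥ 0` because `Z⁺ Z⁻ = 0`, so minimality forces `P = Z⁺`. Finally `Z⁺`
is a polynomial in `Z`, namely the Lagrange interpolant of `x ↦ max x 0` on the spectrum.
-/

open Matrix Polynomial
open scoped MatrixOrder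

theorem exists_aeval_eq_cfc_of_finite_spectrum {R A : Type*} {p : A → Prop} [Field R]
    [StarRing R] [MetricSpace R] [IsTopologicalSemiring R] [ContinuousStar R] [TopologicalSpace A]
    [Ring A] [StarRing A] [Algebra R A] [ContinuousFunctionalCalculus R A p] (f : R → R) (a : A)
    (hfin : (spectrum R a).Finite) (ha : p a := by cfc_tac) :
    ∃ q : R[X], cfc f a = aeval a q := by
  classical
  refine ⟨Lagrange.interpolate hfin.toFinset id f, ?_⟩
  rw [← cfc_polynomial _ a ha]
  refine cfc_congr fun x hx => ?_
  exact (Lagrange.eval_interpolate_at_node f (Set.injOn_id _) (hfin.mem_toFinset.mpr hx)).symm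

open scoped ComplexOrder in
lemma Matrix.PosSemidef.trace_mul_nonneg {𝕜 ι : Type*} [RCLike 𝕜] [Fintype ι] [DecidableEq ι]
    {A B : Matrix ι ι 𝕜} (hA : A.PosSemidef) (hB : B.PosSemidef) : 0 ≤ (A * B).trace := by
  obtain ⟨S, rfl⟩ := CStarAlgebra.nonneg_iff_eq_star_mul_self.mp hB.nonneg
  rw [← mul_assoc, trace_mul_cycle]
  exact (hA.mul_mul_conjTranspose_same S).trace_nonneg

section Refinement

variable {n : ℕ} {Γ : Type*} {c : Fin n × Fin n → Γ} {Z A : Matrix (Fin n) (Fin n) ℝ}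

lemma Refines.exists_apply_eq (hA : Refines c A) : ∃ f : Γ → ℝ, ∀ i j, A i j = f (c (i, j)) :=
  ⟨Function.extend c (fun x => A x.1 x.2) (0 : Γ → ℝ), fun i j =>
    (Function.FactorsThrough.extend_apply (fun x y h => hA x.1 x.2 y.1 y.2 h) _ (i, j)).symm⟩

lemma sum_map_deltaMCWLMultiset (f : Γ → ℝ) (i j : Fin n) :
    ((deltaMCWLMultiset c Z i j).map fun x => f x.1 * x.2).sum =
      ∑ u, f (c (i, u)) * Z u j + ∑ u, f (c (u, j)) * Z i u := by
  simp only [deltaMCWLMultiset, Multiset.map_add, Multiset.sum_add, Multiset.map_map,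
    Function.comp_def, Finset.sum_map_val]
  rw [Finset.sum_filter_of_ne, Finset.sum_filter_of_ne] <;>
    exact fun u _ h hZ => h (by rw [hZ, mul_zero])

namespace IsStableDeltaMCWL

lemma refines_mul_add_mul (hc : IsStableDeltaMCWL c Z) (hA : Refines c A) :
    Refines c (A * Z + Z * A) := by
  obtain ⟨f, hf⟩ := hA.exists_apply_eq
  have hsum : ∀ i j, (A * Z + Z * A) i j =
      ((deltaMCWLMultiset c Z i j).map fun x => f x.1 * x.2).sum := by
    intro i j
    rw [sum_map_deltaMCWLMultiset, Matrix.add_apply, mul_apply, mul_apply]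
    simp only [hf, mul_comm (Z _ _)]
  intro i j p q h
  rw [hsum, hsum, (hc i j p q h).2.2]

lemma refines_one (hc : IsStableDeltaMCWL c Z) : Refines c (1 : Matrix (Fin n) (Fin n) ℝ) := by
  intro i j p q h
  simp only [one_apply, (hc i j p q h).2.1]

lemma refines_pow (hc : IsStableDeltaMCWL c Z) (k : ℕ) : Refines c (Z ^ k) := by
  induction k with
  | zero => exact pow_zero Z ▸ hc.refines_one
  | succ k ih =>
    have h2 : Z ^ k * Z + Z * Z ^ k = (2 : ℝ) • Z ^ (k + 1) := by
      rw [← pow_succ, ← pow_succ', two_smul]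
    intro i j p q h
    have := h2 ▸ hc.refines_mul_add_mul ih i j p q h
    simpa using this

lemma refines_aeval (hc : IsStableDeltaMCWL c Z) (p : ℝ[X]) : Refines c (aeval Z p) := by
  intro i j i' j' h
  simp only [aeval_eq_sum_range, Matrix.sum_apply, Matrix.smul_apply, hc.refines_pow _ i j i' j' h]

end IsStableDeltaMCWL

end Refinement

section Projection

variable {n : ℕ}

lemma frobNorm_sq (A : Matrix (Fin n) (Fin n) ℝ) : frobNorm A ^ 2 = (Aᵀ * A).trace := by
  rw [frobNorm, Real.sq_sqrt (by positivity), Finset.sum_comm]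
  simp [trace, mul_apply, sq]

lemma frobNorm_add_sq (A B : Matrix (Fin n) (Fin n) ℝ) :
    frobNorm (A + B) ^ 2 = frobNorm A ^ 2 + 2 * (Aᵀ * B).trace + frobNorm B ^ 2 := by
  have : (Bᵀ * A).trace = (Aᵀ * B).trace := by
    rw [← trace_transpose, transpose_mul, transpose_transpose]
  simp only [frobNorm_sq, transpose_add, add_mul, mul_add, trace_add, this]
  ring

lemma frobNorm_eq_zero_iff {A : Matrix (Fin n) (Fin n) ℝ} : frobNorm A = 0 ↔ A = 0 := by
  rw [← pow_eq_zero_iff two_ne_zero, frobNorm_sq, ← conjTranspose_eq_transpose_of_trivial,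
    trace_conjTranspose_mul_self_eq_zero_iff]

lemma eq_posPart_of_frobNorm_sub_le {Z P : Matrix (Fin n) (Fin n) ℝ} (hZ : IsSelfAdjoint Z)
    (hP : P.PosSemidef) (h : frobNorm (P - Z) ≤ frobNorm (Z⁺ - Z)) : P = Z⁺ := by
  have hZpos : Z⁺.PosSemidef := nonneg_iff_posSemidef.mp (CFC.posPart_nonneg Z)
  have hZneg : Z⁻.PosSemidef := nonneg_iff_posSemidef.mp (CFC.negPart_nonneg Z)
  set D := P - Z⁺
  have hD : Dᵀ = D := (hP.1.sub hZpos.1).eq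
  have hcross : 0 ≤ (Dᵀ * Z⁻).trace := by
    rw [hD, Matrix.sub_mul, trace_sub, CFC.posPart_mul_negPart, trace_zero, sub_zero]
    exact hP.trace_mul_nonneg hZneg
  have hZZ : Z⁺ - Z = Z⁻ :=
    sub_eq_iff_eq_add'.mpr (sub_eq_iff_eq_add.mp (CFC.posPart_sub_negPart Z hZ))
  have hPZ : P - Z = D + Z⁻ := by rw [← hZZ, sub_add_sub_cancel]
  rw [hPZ, hZZ] at h
  have hsq : frobNorm (D + Z⁻) ^ 2 ≤ frobNorm Z⁻ ^ 2 :=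
    pow_le_pow_left₀ (Real.sqrt_nonneg _) h 2
  rw [frobNorm_add_sq] at hsq
  have hD0 : frobNorm D ^ 2 = 0 := le_antisymm (by linarith) (sq_nonneg _)
  exact sub_eq_zero.mp (frobNorm_eq_zero_iff.mp (pow_eq_zero_iff two_ne_zero |>.mp hD0))

end Projection

/-- A stable δ-MC-WL coloring for a real symmetric matrix `Z` refines the
projection of `Z` onto the PSD cone, i.e. the (unique) symmetric PSD matrix `P` minimizing
the Frobenius norm `‖P - Z‖_F` over all symmetric PSD matrices. -/
theorem stable_deltaMCWL_refines_psd_projection {n : ℕ} {Γ : Type*}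
    (Z : Matrix (Fin n) (Fin n) ℝ) (hZ : Z.IsSymm)
    (c : Fin n × Fin n → Γ) (hc : IsStableDeltaMCWL c Z)
    (P : Matrix (Fin n) (Fin n) ℝ) (hP : P.PosSemidef)
    (hmin : ∀ Q : Matrix (Fin n) (Fin n) ℝ, Q.PosSemidef →
      frobNorm (P - Z) ≤ frobNorm (Q - Z)) :
    Refines c P := by
  have hZ' : IsSelfAdjoint Z := isHermitian_iff_isSelfAdjoint.mp hZ
  have hPZ : P = Z⁺ :=
    eq_posPart_of_frobNorm_sub_le hZ' hP (hmin _ (nonneg_iff_posSemidef.mp (CFC.posPart_nonneg Z)))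
  obtain ⟨q, hq⟩ := exists_aeval_eq_cfc_of_finite_spectrum (·⁺) Z Z.finite_real_spectrum hZ'
  rw [hPZ, CFC.posPart_def, cfcₙ_eq_cfc, hq]
  exact hc.refines_aeval q
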